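/- Let C be the code obtained by puncturing the simplex code S_{q,k} at any t coordinates with t < q^{k-s-1} and 1 ≤ s ≤ k-1. Then C is an s-minimal code. -/

import Mathlib

set_option linter.unusedSectionVars false
set_option linter.unreachableTactic false
set_option linter.unusedTactic false

open Module

variable {F : Type*} [Field F] [Fintype F]

/-- The support of a subspace `U ⊆ F^ι`: coordinates where some vector of `U` is nonzero. -/
def csupp {ι : Type*} (U : Submodule F (ι → F)) : Set ι :=
  {j | ∃ x ∈ U, x j ≠ 0}

/-- The support weight of a subspace of `F^ι`. -/
noncomputable def wt {ι : Type*} (U : Submodule F (ι → F)) : ℕ := (csupp U).ncard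

/-- `U` is an `s`-minimal subcode of `C`. -/
def IsMinimalSubcode {ι : Type*} (C U : Submodule F (ι → F)) (s : ℕ) : Prop :=
  U ≤ C ∧ Module.finrank F U = s ∧
    ∀ V : Submodule F (ι → F), V ≤ C → Module.finrank F V = s →
      csupp V ⊆ csupp U → V = U

/-- `C` is an `s`-minimal code. -/
def SMinimal {ι : Type*} (C : Submodule F (ι → F)) (s : ℕ) : Prop :=
  ∀ U : Submodule F (ι → F), U ≤ C → Module.finrank F U = s → IsMinimalSubcode C U s

/-- The `s`-th generalized Hamming weight of `C`. -/
noncomputable def dGHW {ι : Type*} (C : Submodule F (ι → F)) (s : ℕ) : ℕ :=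
  sInf {w | ∃ U : Submodule F (ι → F), U ≤ C ∧ Module.finrank F U = s ∧ wt U = w}

/-- The `s`-th maximum support weight of `C`. -/
noncomputable def DGHW {ι : Type*} (C : Submodule F (ι → F)) (s : ℕ) : ℕ :=
  sSup {w | ∃ U : Submodule F (ι → F), U ≤ C ∧ Module.finrank F U = s ∧ wt U = w}

/-- `G` is a generator matrix of the simplex code: its columns are nonzero and give exactly
one representative of each one-dimensional subspace of `F^k`. -/
def IsSimplexMatrix {k N : ℕ} (G : Matrix (Fin k) (Fin N) F) : Prop :=
  (∀ i : Fin N, (fun r => G r i) ≠ 0) ∧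
    ∀ P : Submodule F (Fin k → F), Module.finrank F P = 1 →
      ∃! i : Fin N, Submodule.span F {fun r => G r i} = P

lemma csupp_mono {ι : Type*} {U V : Submodule F (ι → F)} (h : U ≤ V) :
    csupp U ⊆ csupp V := fun _ ⟨x, hx, hj⟩ => ⟨x, h hx, hj⟩

lemma csupp_sup {ι : Type*} (U V : Submodule F (ι → F)) :
    csupp (U ⊔ V) = csupp U ∪ csupp V := by
  apply Set.Subset.antisymm
  · rintro j ⟨x, hx, hj⟩
    obtain ⟨u, hu, v, hv, rfl⟩ := Submodule.mem_sup.mp hx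
    by_contra hcon
    simp only [Set.mem_union, not_or] at hcon
    obtain ⟨h1, h2⟩ := hcon
    have hu0 : u j = 0 := by by_contra h; exact h1 ⟨u, hu, h⟩
    have hv0 : v j = 0 := by by_contra h; exact h2 ⟨v, hv, h⟩
    simp only [Pi.add_apply, hu0, hv0, add_zero, ne_eq, not_true_eq_false] at hj
  · rintro j (h | h)
    · exact csupp_mono le_sup_left h
    · exact csupp_mono le_sup_right h

lemma span_singleton_eq_of_mem {V : Type*} [AddCommGroup V] [Module F V]
    {x y : V} (hx : x ≠ 0) (hxy : x ∈ Submodule.span F {y}) :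
    Submodule.span F {x} = Submodule.span F {y} := by
  obtain ⟨a, rfl⟩ := Submodule.mem_span_singleton.mp hxy
  have ha : a ≠ 0 := by rintro rfl; simp at hx
  exact Submodule.span_singleton_smul_eq (isUnit_iff_ne_zero.mpr ha) y


lemma simplex_count_cols {k N q : ℕ} (hq : Fintype.card F = q)
    {G : Matrix (Fin k) (Fin N) F} (hG : IsSimplexMatrix G) (hNe : Nonempty (Fin N))
    (Q : Submodule F (Fin k → F)) :
    {i : Fin N | (fun r => G r i) ∈ Q}.ncard * (q - 1) + 1
      = q ^ Module.finrank F Q := by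
  classical
  set c : Fin N → (Fin k → F) := fun i r => G r i with hc
  have hc0 : ∀ i, c i ≠ 0 := hG.1
  have hex : ∀ x : Fin k → F, x ≠ 0 → ∃! i, Submodule.span F {c i} = Submodule.span F {x} :=
    fun x hx => hG.2 _ (finrank_span_singleton hx)
  set f : (Fin k → F) → Fin N := fun x =>
    if h : x = 0 then hNe.some else (hex x h).choose with hf
  have hf1 : ∀ x, (h : x ≠ 0) → Submodule.span F {c (f x)} = Submodule.span F {x} := by
    intro x h
    simp only [hf, dif_neg h]
    exact (hex x h).choose_spec.1
  have hf2 : ∀ x, (h : x ≠ 0) → ∀ i, Submodule.span F {c i} = Submodule.span F {x} → i = f x := by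
    intro x h i hi
    simp only [hf, dif_neg h]
    exact (hex x h).choose_spec.2 i hi
  set A : Finset (Fin k → F) := Finset.univ.filter (fun x => x ∈ Q ∧ x ≠ 0) with hA
  set B : Finset (Fin N) := Finset.univ.filter (fun i => c i ∈ Q) with hB
  have hset : {i : Fin N | c i ∈ Q}.ncard = B.card := by
    rw [Set.ncard_eq_toFinset_card', Set.toFinset_setOf]
  have hmaps : ∀ x ∈ A, f x ∈ B := by
    intro x hx
    simp only [hA, Finset.mem_filter, Finset.mem_univ, true_and] at hx
    simp only [hB, Finset.mem_filter, Finset.mem_univ, true_and]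
    have h1 : c (f x) ∈ Submodule.span F {x} := by
      rw [← hf1 x hx.2]; exact Submodule.mem_span_singleton_self _
    exact (Submodule.span_singleton_le_iff_mem x Q).mpr hx.1 h1
  have hsum : A.card = ∑ i ∈ B, (A.filter (fun x => f x = i)).card :=
    Finset.card_eq_sum_card_fiberwise hmaps
  have hfiber : ∀ i ∈ B, (A.filter (fun x => f x = i)).card = q - 1 := by
    intro i hi
    simp only [hB, Finset.mem_filter, Finset.mem_univ, true_and] at hi
    have heq : A.filter (fun x => f x = i)
        = (Finset.univ.filter (fun x => x ∈ Submodule.span F {c i})).erase 0 := by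
      ext x
      simp only [hA, Finset.mem_filter, Finset.mem_univ, true_and, Finset.mem_erase]
      constructor
      · rintro ⟨⟨hxQ, hx0⟩, hfx⟩
        refine ⟨hx0, ?_⟩
        have h1 := hf1 x hx0
        rw [hfx] at h1
        rw [h1]
        exact Submodule.mem_span_singleton_self x
      · rintro ⟨hx0, hxs⟩
        have hsp : Submodule.span F {x} = Submodule.span F {c i} :=
          span_singleton_eq_of_mem hx0 hxs
        have hfx : f x = i := (hf2 x hx0 i hsp.symm).symm
        exact ⟨⟨(Submodule.span_singleton_le_iff_mem _ _).mpr hi hxs, hx0⟩, hfx⟩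
    rw [heq]
    have h0mem : (0 : Fin k → F) ∈ Finset.univ.filter
        (fun x => x ∈ Submodule.span F {c i}) := by
      simp [Submodule.zero_mem]
    rw [Finset.card_erase_of_mem h0mem]
    have hcard : (Finset.univ.filter (fun x => x ∈ Submodule.span F {c i})).card
        = Fintype.card (Submodule.span F {c i}) := (Fintype.card_subtype _).symm
    rw [hcard]
    have : Fintype.card (Submodule.span F {c i}) = q := by
      rw [card_eq_pow_finrank (K := F), finrank_span_singleton (hc0 i), hq, pow_one]
    rw [this]
  have hAcard : A.card = B.card * (q - 1) := by
    rw [hsum, Finset.sum_congr rfl hfiber, Finset.sum_const, smul_eq_mul]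
  have hQcard : A.card + 1 = q ^ Module.finrank F Q := by
    have h0mem : (0 : Fin k → F) ∈ Finset.univ.filter (fun x => x ∈ Q) := by
      simp [Submodule.zero_mem]
    have hAeq : A = (Finset.univ.filter (fun x => x ∈ Q)).erase 0 := by
      ext x
      simp only [hA, Finset.mem_filter, Finset.mem_univ, true_and, Finset.mem_erase]
      tauto
    have h1 := Finset.card_erase_add_one h0mem
    have hcard2 : (Finset.univ.filter (fun x => x ∈ Q)).card = Fintype.card Q :=
      (Fintype.card_subtype _).symm
    rw [hAeq, h1, hcard2, card_eq_pow_finrank (K := F), hq]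
  rw [hset, ← hAcard, hQcard]

noncomputable def dotDual (k : ℕ) : (Fin k → F) →ₗ[F] Module.Dual F (Fin k → F) :=
  (LinearMap.mk₂ F (fun x v : Fin k → F => dotProduct x v)
    (fun m₁ m₂ n => add_dotProduct m₁ m₂ n)
    (fun a m n => smul_dotProduct a m n)
    (fun m n₁ n₂ => dotProduct_add m n₁ n₂)
    (fun a m n => dotProduct_smul a m n)).flip

@[simp] lemma dotDual_apply (k : ℕ) (v x : Fin k → F) :
    dotDual k v x = dotProduct x v := rfl

lemma dotDual_injective (k : ℕ) : Function.Injective (dotDual (F := F) k) := by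
  rw [← LinearMap.ker_eq_bot]
  apply LinearMap.ker_eq_bot'.mpr
  intro v hv
  funext i
  have := LinearMap.congr_fun hv (Pi.single i 1)
  simpa [single_dotProduct] using this

lemma wt_map_vecMulLinear {k N q : ℕ} (hq : Fintype.card F = q)
    (hN : N * (q - 1) + 1 = q ^ k)
    {G : Matrix (Fin k) (Fin N) F} (hG : IsSimplexMatrix G) (hNe : Nonempty (Fin N))
    (P : Submodule F (Fin k → F)) :
    wt (P.map (Matrix.vecMulLinear G)) * (q - 1) + q ^ (k - Module.finrank F P)
      = q ^ k := by
  classical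
  set e : (Fin k → F) ≃ₗ[F] Module.Dual F (Fin k → F) :=
    LinearMap.linearEquivOfInjective _ (dotDual_injective k)
      (Subspace.dual_finrank_eq (K := F)).symm with he
  set Qperp : Submodule F (Fin k → F) := P.dualAnnihilator.comap (e : _ →ₗ[F] _) with hQ
  have hmem : ∀ v, v ∈ Qperp ↔ ∀ x ∈ P, dotProduct x v = 0 := by
    intro v
    rw [hQ, Submodule.mem_comap, Submodule.mem_dualAnnihilator]
    simp only [LinearEquiv.coe_coe]
    have hev : ∀ x, (e v : Module.Dual F (Fin k → F)) x = dotProduct x v := by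
      intro x
      simp [he, LinearMap.linearEquivOfInjective_apply]
    constructor <;> intro h x hx
    · rw [← hev x]; exact h x hx
    · rw [hev x]; exact h x hx
  have hrankP : Module.finrank F Qperp + Module.finrank F P = k := by
    have h1 : Module.finrank F Qperp = Module.finrank F P.dualAnnihilator := by
      rw [hQ, Submodule.comap_equiv_eq_map_symm, LinearEquiv.finrank_map_eq]
    have h2 := LinearEquiv.finrank_eq (R := F) (M := (Fin k → F) ⧸ P)
      (N := ↥P.dualAnnihilator) (Subspace.quotEquivAnnihilator P)
    have h3 := Submodule.finrank_quotient_add_finrank P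
    rw [Module.finrank_fin_fun] at h3
    omega
  have hsupp : csupp (P.map (Matrix.vecMulLinear G))
      = {i : Fin N | (fun r => G r i) ∉ Qperp} := by
    ext j
    simp only [csupp, Set.mem_setOf_eq, Submodule.mem_map, hmem]
    constructor
    · rintro ⟨y, ⟨x, hx, rfl⟩, hyj⟩
      intro hall
      exact hyj (hall x hx)
    · intro h
      push_neg at h
      obtain ⟨x, hx, hxj⟩ := h
      exact ⟨Matrix.vecMulLinear G x, ⟨x, hx, rfl⟩, hxj⟩
  have hcnt := simplex_count_cols hq hG hNe Qperp
  have hcompl := Set.ncard_add_ncard_compl {i : Fin N | (fun r => G r i) ∈ Qperp}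
    (Set.toFinite _) (Set.toFinite _)
  rw [Set.compl_setOf, Nat.card_eq_fintype_card, Fintype.card_fin] at hcompl
  have hwt : wt (P.map (Matrix.vecMulLinear G))
      = {i : Fin N | ¬ (fun r => G r i) ∈ Qperp}.ncard := by
    rw [wt, hsupp]
  have he2 : k - Module.finrank F P = Module.finrank F Qperp := by omega
  rw [he2, hwt, ← hcnt]
  set a := {i : Fin N | (fun r => G r i) ∈ Qperp}.ncard
  set w := {i : Fin N | ¬ (fun r => G r i) ∈ Qperp}.ncard
  calc w * (q - 1) + (a * (q - 1) + 1) = (a + w) * (q - 1) + 1 := by ring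
    _ = N * (q - 1) + 1 := by rw [hcompl]
    _ = q ^ k := hN

lemma csupp_map_funLeft {N : ℕ} (T : Finset (Fin N)) (S : Submodule F (Fin N → F)) :
    csupp (S.map (LinearMap.funLeft F F (Subtype.val : {i : Fin N // i ∉ T} → Fin N)))
      = Subtype.val ⁻¹' csupp S := by
  ext j
  simp only [csupp, Set.mem_setOf_eq, Submodule.mem_map, Set.mem_preimage]
  constructor
  · rintro ⟨y, ⟨x, hx, rfl⟩, hyj⟩
    exact ⟨x, hx, by simpa [LinearMap.funLeft_apply] using hyj⟩
  · rintro ⟨x, hx, hxj⟩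
    exact ⟨LinearMap.funLeft F F Subtype.val x, ⟨x, hx, rfl⟩,
      by simpa [LinearMap.funLeft_apply] using hxj⟩

lemma wt_map_funLeft {N : ℕ} (T : Finset (Fin N)) (S : Submodule F (Fin N → F)) :
    wt (S.map (LinearMap.funLeft F F (Subtype.val : {i : Fin N // i ∉ T} → Fin N)))
      = (csupp S \ ↑T).ncard := by
  rw [wt, csupp_map_funLeft]
  rw [← Set.ncard_image_of_injective _ (Subtype.val_injective
    (p := fun i : Fin N => i ∉ T))]
  congr 1
  rw [Set.image_preimage_eq_inter_range, Subtype.range_coe_subtype]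
  ext j
  simp only [Set.mem_inter_iff, Set.mem_setOf_eq, Set.mem_diff, Finset.mem_coe]

lemma exists_preimage {k N : ℕ} (G : Matrix (Fin k) (Fin N) F) (T : Finset (Fin N))
    (X : Submodule F ({i : Fin N // i ∉ T} → F))
    (hX : X ≤ (LinearMap.range (Matrix.vecMulLinear G)).map
      (LinearMap.funLeft F F (Subtype.val : {i : Fin N // i ∉ T} → Fin N))) :
    ∃ P : Submodule F (Fin k → F), Module.finrank F P = Module.finrank F X ∧
      (P.map (Matrix.vecMulLinear G)).map
        (LinearMap.funLeft F F (Subtype.val : {i : Fin N // i ∉ T} → Fin N)) = X := by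
  classical
  set π := LinearMap.funLeft F F (Subtype.val : {i : Fin N // i ∉ T} → Fin N) with hπ
  set M := Matrix.vecMulLinear G with hM
  set n := Module.finrank F X with hn
  let b : Basis (Fin n) F X := Module.finBasis F X
  have hlift : ∀ j : Fin n, ∃ zj : Fin k → F, π (M zj) = (b j : {i : Fin N // i ∉ T} → F) := by
    intro j
    have hb : (b j : {i : Fin N // i ∉ T} → F) ∈ X := (b j).2
    obtain ⟨y, ⟨zj, rfl⟩, hy⟩ := hX hb
    exact ⟨zj, hy⟩
  choose z hz using hlift
  have hbs : Submodule.span F (Set.range (fun j => (b j : {i : Fin N // i ∉ T} → F))) = X := by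
    have h1 := b.span_eq
    have h2 : Submodule.map X.subtype (Submodule.span F (Set.range ⇑b)) = X := by
      rw [h1, Submodule.map_subtype_top]
    rw [Submodule.map_span, ← Set.range_comp] at h2
    exact h2
  have hmap : ((Submodule.span F (Set.range z)).map M).map π = X := by
    rw [← Submodule.map_comp, Submodule.map_span, ← Set.range_comp]
    have hcomp : (⇑(π ∘ₗ M)) ∘ z = fun j => (b j : {i : Fin N // i ∉ T} → F) := by
      funext j
      simp only [Function.comp_apply, LinearMap.comp_apply]
      exact hz j
    rw [hcomp, hbs]
  refine ⟨Submodule.span F (Set.range z), le_antisymm ?_ ?_, hmap⟩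
  · have h1 := finrank_span_le_card (R := F) (Set.range z)
    have h2 : (Set.range z).toFinset.card ≤ n := by
      rw [Set.toFinset_range]
      exact (Finset.card_image_le).trans (by simp)
    exact h1.trans h2
  · have h3 := Submodule.finrank_map_le (π ∘ₗ M) (Submodule.span F (Set.range z))
    rw [Submodule.map_comp, hmap] at h3
    exact h3

lemma wt_def {ι : Type*} (U : Submodule F (ι → F)) : wt U = (csupp U).ncard := rfl

/-- puncturing the simplex code `S_{q,k}` at any `t < q^{k-s-1}` coordinates
yields an `s`-minimal code (`1 ≤ s ≤ k-1`). -/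
theorem punctured_simplex_sMinimal (k N q s t : ℕ) (hq : Fintype.card F = q)
    (hs1 : 1 ≤ s) (hs2 : s ≤ k - 1)
    (hN : N * (q - 1) = q ^ k - 1)
    (G : Matrix (Fin k) (Fin N) F) (hG : IsSimplexMatrix G)
    (T : Finset (Fin N)) (hT : T.card = t) (ht : t < q ^ (k - s - 1)) :
    SMinimal (Submodule.map
      (LinearMap.funLeft F F (Subtype.val : {i : Fin N // i ∉ T} → Fin N))
      (LinearMap.range (Matrix.vecMulLinear G))) s := by
  classical
  intro U hU hUrank
  refine ⟨hU, hUrank, ?_⟩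
  have hq2 : 2 ≤ q := by rw [← hq]; exact Fintype.one_lt_card
  have hk : 2 ≤ k := by omega
  have hsk : s + 1 ≤ k := by omega
  have hqk : 1 ≤ q ^ k := Nat.one_le_pow _ _ (by omega)
  have hN' : N * (q - 1) + 1 = q ^ k := by omega
  have hNe : Nonempty (Fin N) := by
    have h0 : (Pi.single (⟨0, by omega⟩ : Fin k) 1 : Fin k → F) ≠ 0 := by
      intro h
      have := congrFun h ⟨0, by omega⟩
      simp at this
    obtain ⟨i, -⟩ := hG.2 _ (finrank_span_singleton h0)
    exact ⟨i⟩
  intro V hV hVrank hVU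
  by_contra hne
  set π := LinearMap.funLeft F F (Subtype.val : {i : Fin N // i ∉ T} → Fin N) with hπ
  set M := Matrix.vecMulLinear G with hM
  set W := U ⊔ V with hW
  have hWC : W ≤ Submodule.map π (LinearMap.range M) := sup_le hU hV
  have hm1 : s + 1 ≤ Module.finrank F W := by
    by_contra hcon
    push_neg at hcon
    have hUW : U ≤ W := le_sup_left
    have h1 : Module.finrank F U ≤ Module.finrank F W := Submodule.finrank_mono hUW
    have hUeqW : U = W := Submodule.eq_of_le_of_finrank_le hUW (by omega)
    have hVle : V ≤ U := by rw [hUeqW]; exact le_sup_right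
    exact hne (Submodule.eq_of_le_of_finrank_le hVle (by omega))
  set m := Module.finrank F W with hm
  obtain ⟨PU, hPUrank, hPUmap⟩ := exists_preimage G T U hU
  obtain ⟨PW, hPWrank, hPWmap⟩ := exists_preimage G T W hWC
  rw [hUrank] at hPUrank
  rw [← hm] at hPWrank
  have hEU := wt_map_vecMulLinear hq hN' hG hNe PU
  have hEW := wt_map_vecMulLinear hq hN' hG hNe PW
  rw [hPUrank] at hEU
  rw [hPWrank] at hEW
  have hcsuppWU : csupp W = csupp U := by
    rw [hW, csupp_sup, Set.union_eq_left.mpr hVU]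
  have hwtU : wt U = (csupp (PU.map M) \ ↑T).ncard := by rw [← hPUmap, wt_map_funLeft]
  have hwtW : wt W = (csupp (PW.map M) \ ↑T).ncard := by rw [← hPWmap, wt_map_funLeft]
  have hwtUW : wt U = wt W := by rw [wt_def, wt_def, hcsuppWU]
  set a := wt (PU.map M) with ha
  set bb := wt (PW.map M) with hb
  have hUa : wt U ≤ a := by
    rw [hwtU, ha, wt_def]
    exact Set.ncard_le_ncard Set.diff_subset (Set.toFinite _)
  have hWb : bb ≤ wt W + t := by
    rw [hwtW, hb, wt_def]
    have hsub : csupp (PW.map M) ⊆ (csupp (PW.map M) \ ↑T) ∪ ↑T := by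
      intro j hj
      by_cases hjT : j ∈ T
      · exact Or.inr hjT
      · exact Or.inl ⟨hj, hjT⟩
    calc (csupp (PW.map M)).ncard ≤ ((csupp (PW.map M) \ ↑T) ∪ ↑T).ncard :=
          Set.ncard_le_ncard hsub (Set.toFinite _)
      _ ≤ (csupp (PW.map M) \ ↑T).ncard + (↑T : Set (Fin N)).ncard :=
          Set.ncard_union_le _ _
      _ = (csupp (PW.map M) \ ↑T).ncard + t := by rw [Set.ncard_coe_finset, hT]
  have hba : bb ≤ a + t := by omega
  have hpow1 : q ^ (k - m) ≤ q ^ (k - s - 1) :=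
    Nat.pow_le_pow_right (by omega) (by omega)
  have hpow2 : q ^ (k - s) = q ^ (k - s - 1) * q := by
    rw [← pow_succ]
    congr 1
    omega
  have hlt : t * (q - 1) < q ^ (k - s - 1) * (q - 1) :=
    (Nat.mul_lt_mul_right (by omega : 0 < q - 1)).mpr ht
  have hx : q ^ (k - s - 1) * (q - 1) + q ^ (k - s - 1) = q ^ (k - s - 1) * q := by
    have hq1 : q - 1 + 1 = q := by omega
    rw [← hq1, Nat.mul_add, Nat.mul_one]
    congr 2 <;> omega
  have hcontr : q ^ k < q ^ k := by
    calc q ^ k = bb * (q - 1) + q ^ (k - m) := hEW.symm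
      _ ≤ (a + t) * (q - 1) + q ^ (k - s - 1) :=
          Nat.add_le_add (Nat.mul_le_mul_right _ hba) hpow1
      _ = a * (q - 1) + (t * (q - 1) + q ^ (k - s - 1)) := by ring
      _ < a * (q - 1) + (q ^ (k - s - 1) * (q - 1) + q ^ (k - s - 1)) :=
          Nat.add_lt_add_left (Nat.add_lt_add_right hlt _) _
      _ = a * (q - 1) + q ^ (k - s - 1) * q := by rw [hx]
      _ = a * (q - 1) + q ^ (k - s) := by rw [hpow2]
      _ = q ^ k := hEU
  omega
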